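/- Let n ≥ 1 be an integer and m a nonnegative integer, and set a := −m − 1/2, b := n + m + 1/2, c := n + 1/2. Then the hypergeometric series at 1 converges to zero: Σ_{k=0}^∞ (a)_k (b)_k / (k! (c)_k) = 0. Equivalently, the eigenfunction φ_{2m+1}(ρ) := F(−m − 1/2, n + m + 1/2, n + 1/2, ρ²) of the radial problem satisfies the boundary condition φ_{2m+1}(1) = 0. -/

import Mathlib

open Set Filter
open scoped Topology Real

/-- Pochhammer symbol `(d)_k = d(d+1)⋯(d+k−1)` over the reals. -/
noncomputable def poch (d : ℝ) (k : ℕ) : ℝ := Polynomial.eval d (ascPochhammer ℝ k)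

/-- The `k`-th coefficient `(a)_k (b)_k / (k! (c)_k)` of the Gauss hypergeometric series. -/
noncomputable def hypCoeff (a b c : ℝ) (k : ℕ) : ℝ :=
  poch a k * poch b k / ((k.factorial : ℝ) * poch c k)

/-- The Gauss hypergeometric series `F(a,b,c,x) = Σ_k ((a)_k (b)_k / (k! (c)_k)) x^k`. -/
noncomputable def hypF (a b c x : ℝ) : ℝ := ∑' k : ℕ, hypCoeff a b c k * x ^ k

/-- The first hypergeometric solution
`ψ₁(λ,ρ) = F((n−μ)/2, (n+μ)/2, n + 1/2, ρ²)` with `μ = √(n² + λ)`. -/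
noncomputable def psi1 (n : ℕ) (lam ρ : ℝ) : ℝ :=
  hypF (((n : ℝ) - Real.sqrt ((n : ℝ) ^ 2 + lam)) / 2)
    (((n : ℝ) + Real.sqrt ((n : ℝ) ^ 2 + lam)) / 2) ((n : ℝ) + 1 / 2) (ρ ^ 2)

/-- The second hypergeometric solution
`ψ₂(λ,ρ) = ρ^{1−2n} F((1−n−μ)/2, (1−n+μ)/2, 3/2 − n, ρ²)` with `μ = √(n² + λ)`. -/
noncomputable def psi2 (n : ℕ) (lam ρ : ℝ) : ℝ :=
  hypF ((1 - (n : ℝ) - Real.sqrt ((n : ℝ) ^ 2 + lam)) / 2)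
    ((1 - (n : ℝ) + Real.sqrt ((n : ℝ) ^ 2 + lam)) / 2) (3 / 2 - (n : ℝ)) (ρ ^ 2)
    / ρ ^ (2 * n - 1)

/-- The radial equation
`(1−ρ²)·φ''(ρ) + ((2n − (2n+1)ρ²)/ρ)·φ'(ρ) = −λ·φ(ρ)` at the point `ρ`. -/
def RadialEq (n : ℕ) (lam : ℝ) (φ : ℝ → ℝ) (ρ : ℝ) : Prop :=
  (1 - ρ ^ 2) * deriv (deriv φ) ρ
    + ((2 * (n : ℝ) - (2 * (n : ℝ) + 1) * ρ ^ 2) / ρ) * deriv φ ρ = -lam * φ ρ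


/-
Since `b = c + m`, the ratio `(b)_k / (c)_k = (c + k)_m / (c)_m` is a polynomial of degree `m`
in `k`, so the series is `(c)_m⁻¹ Σ_k (a)_k (c + k)_m / k!`. Writing `(c + k)_{m+1}` as
`(c + m)(c + k)_m + k (c + k)_m` and absorbing the factor `k` into `(a)_k / k!` expresses the
partial sums for `m + 1` through those for `m` at `(a, c)` and at `(a + 1, c + 1)`. For `m = 0`
the partial sums telescope to `(a + 1)_N / N!`, which tends to `0` for `a < 0` by Euler's limit
formula for `Γ`. By induction the partial sums tend to `0` whenever `a + m < 0`; this is the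
vanishing of Gauss's `Γ(c)Γ(c - a - b) / (Γ(c - a)Γ(c - b))` at the pole `c - b = -m`.
-/

open scoped Nat

lemma poch_zero (d : ℝ) : poch d 0 = 1 := by simp [poch]

lemma poch_succ (d : ℝ) (k : ℕ) : poch d (k + 1) = poch d k * (d + k) := by
  simpa [poch] using ascPochhammer_succ_eval k d

lemma poch_succ_left (d : ℝ) (k : ℕ) : poch d (k + 1) = d * poch (d + 1) k := by
  simp [poch, ascPochhammer_succ_left, Polynomial.eval_comp]

lemma poch_add (d : ℝ) (k m : ℕ) : poch d (k + m) = poch d k * poch (d + k) m := by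
  simpa [poch, Polynomial.eval_comp] using
    (congrArg (Polynomial.eval d) (ascPochhammer_mul ℝ k m)).symm

lemma poch_eq_prod_range (d : ℝ) (k : ℕ) : poch d k = ∏ j ∈ Finset.range k, (d + j) := by
  induction k with
  | zero => simp [poch_zero]
  | succ k ih => rw [poch_succ, ih, Finset.prod_range_succ]

lemma poch_neg_natCast_of_lt {j k : ℕ} (h : j < k) : poch (-j) k = 0 := by
  rw [poch_eq_prod_range]
  exact Finset.prod_eq_zero (Finset.mem_range.mpr h) (by ring)

lemma poch_succ_div_factorial_succ (e : ℝ) {n : ℕ} (hn : n ≠ 0) :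
    poch e (n + 1) / (n + 1)! = (n : ℝ) ^ (e - 1) * (n / (n + 1)) * (Real.GammaSeq e n)⁻¹ := by
  have hn0 : (0 : ℝ) < n := by positivity
  rw [Real.GammaSeq, ← poch_eq_prod_range, inv_div, Nat.factorial_succ, Nat.cast_mul,
    Nat.cast_succ, Real.rpow_sub hn0, Real.rpow_one]
  have : (n : ℝ) ^ e ≠ 0 := (Real.rpow_pos_of_pos hn0 e).ne'
  field_simp

lemma tendsto_poch_div_factorial {e : ℝ} (he : e < 1) :
    Tendsto (fun N : ℕ => poch e N / N !) atTop (𝓝 0) := by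
  by_cases hint : ∃ j : ℕ, e = -j
  · obtain ⟨j, rfl⟩ := hint
    refine tendsto_const_nhds.congr' ?_
    filter_upwards [eventually_gt_atTop j] with N hN
    rw [poch_neg_natCast_of_lt hN, zero_div]
  · push Not at hint
    rw [← tendsto_add_atTop_iff_nat 1]
    have hpow : Tendsto (fun n : ℕ => (n : ℝ) ^ (e - 1)) atTop (𝓝 0) := by
      simpa [Function.comp_def, neg_sub] using
        (tendsto_rpow_neg_atTop (by linarith : 0 < 1 - e)).comp tendsto_natCast_atTop_atTop
    have hGamma := (Real.GammaSeq_tendsto_Gamma e).inv₀ (Real.Gamma_ne_zero hint)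
    have h := (hpow.mul (tendsto_natCast_div_add_atTop (1 : ℝ))).mul hGamma
    rw [zero_mul, zero_mul] at h
    refine h.congr' ?_
    filter_upwards [eventually_ne_atTop 0] with n hn
    exact_mod_cast (poch_succ_div_factorial_succ e hn).symm

lemma sum_range_succ_poch_div_factorial (a : ℝ) (N : ℕ) :
    ∑ k ∈ Finset.range (N + 1), poch a k / k ! = poch (a + 1) N / N ! := by
  induction N with
  | zero => simp [poch_zero]
  | succ N ih =>
    rw [Finset.sum_range_succ, ih, poch_succ_left, poch_succ, Nat.factorial_succ, Nat.cast_mul,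
      Nat.cast_succ]
    field_simp
    ring

noncomputable def pochSum (a c : ℝ) (m N : ℕ) : ℝ :=
  ∑ k ∈ Finset.range N, poch a k * poch (c + k) m / k !

lemma pochSum_zero_succ (a c : ℝ) (N : ℕ) : pochSum a c 0 (N + 1) = poch (a + 1) N / N ! := by
  simp only [pochSum, poch_zero, mul_one, sum_range_succ_poch_div_factorial]

lemma pochSum_succ_succ (a c : ℝ) (m N : ℕ) :
    pochSum a c (m + 1) (N + 1) =
      (c + m) * pochSum a c m (N + 1) + a * pochSum (a + 1) (c + 1) m N := by
  have hsplit : ∀ k : ℕ, poch a k * poch (c + k) (m + 1) / k !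
      = (c + m) * (poch a k * poch (c + k) m / k !) + k * poch a k * poch (c + k) m / k ! := by
    intro k
    rw [poch_succ]
    ring
  have hshift : ∀ k : ℕ, ((k + 1 : ℕ) : ℝ) * poch a (k + 1) * poch (c + (k + 1 : ℕ)) m / (k + 1)!
      = a * (poch (a + 1) k * poch (c + 1 + k) m / k !) := by
    intro k
    rw [poch_succ_left, Nat.factorial_succ, Nat.cast_mul, Nat.cast_succ,
      show c + ((k : ℝ) + 1) = c + 1 + k by ring]
    field_simp
  simp only [pochSum, hsplit, Finset.sum_add_distrib, ← Finset.mul_sum]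
  rw [Finset.sum_range_succ' (fun k : ℕ => (k : ℝ) * _ * _ / _)]
  simp only [hshift, Nat.cast_zero, zero_mul, zero_div, add_zero, ← Finset.mul_sum]

lemma tendsto_pochSum {a : ℝ} {m : ℕ} (ham : a + m < 0) (c : ℝ) :
    Tendsto (pochSum a c m) atTop (𝓝 0) := by
  induction m generalizing a c with
  | zero =>
    rw [← tendsto_add_atTop_iff_nat 1]
    simp only [pochSum_zero_succ]
    exact tendsto_poch_div_factorial (by simpa using ham)
  | succ m ih =>
    push_cast at ham
    have h₁ := (tendsto_add_atTop_iff_nat 1).mpr (ih (by linarith) c)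
    have h₂ := ih (a := a + 1) (by linarith) (c + 1)
    rw [← tendsto_add_atTop_iff_nat 1]
    simpa [pochSum_succ_succ] using (h₁.const_mul (c + m)).add (h₂.const_mul a)

lemma hypCoeff_add_natCast {c : ℝ} (hc : 0 < c) (a : ℝ) (m k : ℕ) :
    hypCoeff a (c + m) c k = poch a k * poch (c + k) m / k ! / poch c m := by
  have hcomm : poch c m * poch (c + m) k = poch c k * poch (c + k) m := by
    rw [← poch_add, ← poch_add, Nat.add_comm]
  have hck : poch c k ≠ 0 := (ascPochhammer_pos k c hc).ne'
  have hcm : poch c m ≠ 0 := (ascPochhammer_pos m c hc).ne'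
  rw [hypCoeff]
  field_simp
  linear_combination poch a k * hcomm

lemma tsum_eq_zero_of_tendsto_sum_range {α : Type*} [AddCommMonoid α] [TopologicalSpace α]
    [T2Space α] {f : ℕ → α} (h : Tendsto (fun N => ∑ k ∈ Finset.range N, f k) atTop (𝓝 0)) :
    ∑' k, f k = 0 := by
  by_cases hf : Summable f
  · exact tendsto_nhds_unique hf.hasSum.tendsto_sum_nat h
  · exact tsum_eq_zero_of_not_summable hf

theorem tsum_hypCoeff_add_natCast_eq_zero {a c : ℝ} {m : ℕ} (hc : 0 < c) (ham : a + m < 0) :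
    ∑' k, hypCoeff a (c + m) c k = 0 := by
  refine tsum_eq_zero_of_tendsto_sum_range ?_
  have h := (tendsto_pochSum ham c).div_const (poch c m)
  rw [zero_div] at h
  refine h.congr fun N => ?_
  simp only [pochSum, Finset.sum_div, hypCoeff_add_natCast hc]

theorem eigenfunction_odd_boundary_value_general (n m : ℕ) :
    (∑' k : ℕ,
        hypCoeff (-(m : ℝ) - 1 / 2) ((n : ℝ) + (m : ℝ) + 1 / 2)
          ((n : ℝ) + 1 / 2) k) = 0 := by
  have h := tsum_hypCoeff_add_natCast_eq_zero (a := -(m : ℝ) - 1 / 2) (c := n + 1 / 2) (m := m)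
    (by positivity) (by linarith)
  rwa [add_right_comm] at h

/-- the hypergeometric series with parameters
`a = −m−1/2`, `b = n+m+1/2`, `c = n+1/2` sums to `0` at `x = 1`; equivalently,
the odd eigenfunction `φ_{2m+1}` satisfies the boundary condition
`φ_{2m+1}(1) = 0`. -/
theorem eigenfunction_odd_boundary_value (n m : ℕ) (hn : 1 ≤ n) :
    (∑' k : ℕ,
        hypCoeff (-(m : ℝ) - 1 / 2) ((n : ℝ) + (m : ℝ) + 1 / 2)
          ((n : ℝ) + 1 / 2) k) = 0 :=
  eigenfunction_odd_boundary_value_general n m
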